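/- arXiv:1803.06735 — 2 statements merged into one kernel-verified Lean document; each statement's English description precedes it below -/
import Mathlib

section
/- Identifiability of the constrained three-component Gaussian mixture. Let μ1, μ1' < 0 < μ2, μ2', let σ1, σ1', σ2, σ2' > 0, and let λ_1, λ_2, λ_1', λ_2' ∈ (0,1) with λ_1 + λ_2 < 1 and λ_1' + λ_2' < 1. If for every t ∈ ℝ, (1 − λ_1 − λ_2) φ_{(μ1,σ1)}(t) + λ_1 φ(t) + λ_2 φ_{(μ2,σ2)}(t) = (1 − λ_1' − λ_2') φ_{(μ1',σ1')}(t) + λ_1' φ(t) + λ_2' φ_{(μ2',σ2')}(t), then μ1 = μ1', σ1 = σ1', μ2 = μ2', σ2 = σ2', λ_1 = λ_1', and λ_2 = λ_2'. -/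
open MeasureTheory

/-- Standard normal density. -/
noncomputable def stdPhi (t : ℝ) : ℝ := Real.exp (-t ^ 2 / 2) / Real.sqrt (2 * Real.pi)

/-- Density of `N(μ, σ²)`. -/
noncomputable def phiMS (μ σ t : ℝ) : ℝ := (1 / σ) * stdPhi ((t - μ) / σ)

/-!
Distinct Gaussian densities are linearly independent: among finitely many, the one that is maximal
for the lexicographic order on `(σ, μ)` dominates all the others in the right tail, so its
coefficient vanishes, and induction removes the rest. Hence a finite Gaussian mixture determines
its mixing distribution, a finitely supported weight function on parameter pairs `(μ, σ)`. The sign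
constraints keep the atoms `(μ1, σ1)`, `(0, 1)`, `(μ2, σ2)` apart and forbid matching the outer ones
crosswise, so comparing weights atom by atom identifies every parameter.
-/

open Filter Topology

lemma tendsto_quadratic_atBot {a b c : ℝ} (h : a < 0 ∨ a = 0 ∧ b < 0) :
    Tendsto (fun t : ℝ => a * t ^ 2 + b * t + c) atTop atBot := by
  rcases h with ha | ⟨rfl, hb⟩
  · have hlin : Tendsto (fun t : ℝ => a * t + b) atTop atBot :=
      tendsto_atBot_add_const_right _ b (tendsto_id.const_mul_atTop_of_neg ha)
    exact tendsto_atBot_add_const_right _ c (tendsto_id.atTop_mul_atBot₀ hlin)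
      |>.congr fun t => by simp only [id]; ring
  · exact tendsto_atBot_add_const_right _ c (tendsto_id.const_mul_atTop_of_neg hb)
      |>.congr fun t => by simp only [id]; ring

lemma phiMS_eq (μ : ℝ) {σ : ℝ} (hσ : σ ≠ 0) (t : ℝ) :
    phiMS μ σ t = Real.exp (-(t - μ) ^ 2 / (2 * σ ^ 2)) / (σ * Real.sqrt (2 * Real.pi)) := by
  rw [phiMS, stdPhi, div_pow]
  field_simp

lemma phiMS_pos (μ : ℝ) {σ : ℝ} (hσ : 0 < σ) (t : ℝ) : 0 < phiMS μ σ t := by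
  rw [phiMS_eq μ hσ.ne']
  positivity

lemma phiMS_zero_one : phiMS 0 1 = stdPhi := by
  ext t
  simp [phiMS]

lemma tendsto_phiMS_div_phiMS {μ σ μ₀ σ₀ : ℝ} (hσ : 0 < σ) (hσ₀ : 0 < σ₀)
    (h : toLex (σ, μ) < toLex (σ₀, μ₀)) :
    Tendsto (fun t => phiMS μ σ t / phiMS μ₀ σ₀ t) atTop (𝓝 0) := by
  set a := 1 / (2 * σ₀ ^ 2) - 1 / (2 * σ ^ 2)
  set b := μ / σ ^ 2 - μ₀ / σ₀ ^ 2
  set c := μ₀ ^ 2 / (2 * σ₀ ^ 2) - μ ^ 2 / (2 * σ ^ 2)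
  have hratio : ∀ t, phiMS μ σ t / phiMS μ₀ σ₀ t
      = σ₀ / σ * Real.exp (a * t ^ 2 + b * t + c) := by
    intro t
    have hexp : a * t ^ 2 + b * t + c
        = -(t - μ) ^ 2 / (2 * σ ^ 2) - -(t - μ₀) ^ 2 / (2 * σ₀ ^ 2) := by
      simp only [a, b, c]
      field_simp
      ring
    rw [hexp, Real.exp_sub, phiMS_eq μ hσ.ne', phiMS_eq μ₀ hσ₀.ne']
    field_simp
  have hab : a < 0 ∨ a = 0 ∧ b < 0 := by
    rcases Prod.Lex.toLex_lt_toLex.1 h with hlt | ⟨rfl, hlt⟩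
    · left
      have : 1 / (2 * σ₀ ^ 2) < 1 / (2 * σ ^ 2) := by gcongr
      linarith
    · right
      refine ⟨sub_self _, sub_neg.2 ?_⟩
      gcongr
  simpa [hratio] using
    (Real.tendsto_exp_atBot.comp (tendsto_quadratic_atBot (c := c) hab)).const_mul (σ₀ / σ)

theorem linearIndepOn_phiMS :
    LinearIndepOn ℝ (fun q : ℝ × ℝ => phiMS q.1 q.2) {q | 0 < q.2} := by
  classical
  rw [linearIndepOn_iff']
  intro s g
  induction s using Finset.induction_on_max_value (fun q : ℝ × ℝ => toLex (q.2, q.1)) with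
  | empty => simp
  | insert p s hps hmax ih =>
    intro hsub hsum
    simp only [Finset.coe_insert, Set.insert_subset_iff, Set.mem_ofPred_eq] at hsub
    rw [Finset.sum_insert hps] at hsum
    have hlt : ∀ q ∈ s, toLex (q.2, q.1) < toLex (p.2, p.1) := fun q hq =>
      (hmax q hq).lt_of_ne fun h => hps (by
        obtain ⟨h2, h1⟩ := Prod.ext_iff.1 (toLex.injective h)
        exact Prod.ext h1 h2 ▸ hq)
    have hlim : Tendsto (fun t => g p + ∑ q ∈ s, g q * (phiMS q.1 q.2 t / phiMS p.1 p.2 t))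
        atTop (𝓝 (g p + ∑ q ∈ s, g q * 0)) :=
      tendsto_const_nhds.add <| tendsto_finsetSum _ fun q hq =>
        (tendsto_phiMS_div_phiMS (hsub.2 hq) hsub.1 (hlt q hq)).const_mul (g q)
    have hzero : ∀ t, g p + ∑ q ∈ s, g q * (phiMS q.1 q.2 t / phiMS p.1 p.2 t) = 0 := by
      intro t
      have ht := congr_fun hsum t
      simp only [Pi.add_apply, Finset.sum_apply, Pi.smul_apply, smul_eq_mul, Pi.zero_apply] at ht
      have hpos := phiMS_pos p.1 hsub.1 t
      simp only [mul_div_assoc', ← Finset.sum_div]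
      field_simp
      linarith
    have hgp : g p = 0 := by
      simpa using tendsto_nhds_unique hlim (tendsto_const_nhds.congr fun t => (hzero t).symm)
    rw [hgp, zero_smul, zero_add] at hsum
    intro q hq
    rcases Finset.mem_insert.1 hq with rfl | hq
    · exact hgp
    · exact ih hsub.2 hsum q hq

noncomputable def trinormalWeights (μ1 σ1 μ2 σ2 lam1 lam2 : ℝ) : ℝ × ℝ →₀ ℝ :=
  Finsupp.single (μ1, σ1) (1 - lam1 - lam2) + Finsupp.single (0, 1) lam1
    + Finsupp.single (μ2, σ2) lam2

lemma trinormalWeights_mem_supported {μ1 σ1 μ2 σ2 : ℝ} (lam1 lam2 : ℝ) (hσ1 : 0 < σ1)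
    (hσ2 : 0 < σ2) :
    trinormalWeights μ1 σ1 μ2 σ2 lam1 lam2 ∈ Finsupp.supported ℝ ℝ {q : ℝ × ℝ | 0 < q.2} := by
  refine add_mem (add_mem ?_ ?_) ?_ <;> refine Finsupp.single_mem_supported ℝ _ ?_
  exacts [hσ1, zero_lt_one' ℝ, hσ2]

lemma linearCombination_trinormalWeights (μ1 σ1 μ2 σ2 lam1 lam2 : ℝ) :
    Finsupp.linearCombination ℝ (fun q : ℝ × ℝ => phiMS q.1 q.2)
        (trinormalWeights μ1 σ1 μ2 σ2 lam1 lam2)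
      = fun t => (1 - lam1 - lam2) * phiMS μ1 σ1 t + lam1 * stdPhi t + lam2 * phiMS μ2 σ2 t := by
  ext t
  simp [trinormalWeights, phiMS_zero_one]
  ring

lemma eq_of_trinormalWeights_eq {μ1 μ1' μ2 μ2' σ1 σ1' σ2 σ2' lam1 lam2 lam1' lam2' : ℝ}
    (hμ1 : μ1 < 0) (hμ1' : μ1' < 0) (hμ2 : 0 < μ2) (hμ2' : 0 < μ2') (hlam2 : lam2 ≠ 0)
    (hlam0 : 1 - lam1 - lam2 ≠ 0)
    (h : trinormalWeights μ1 σ1 μ2 σ2 lam1 lam2 = trinormalWeights μ1' σ1' μ2' σ2' lam1' lam2') :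
    μ1 = μ1' ∧ σ1 = σ1' ∧ μ2 = μ2' ∧ σ2 = σ2' ∧ lam1 = lam1' ∧ lam2 = lam2' := by
  have h0 := DFunLike.congr_fun h (0, 1)
  have h1 := DFunLike.congr_fun h (μ1, σ1)
  have h2 := DFunLike.congr_fun h (μ2, σ2)
  simp only [trinormalWeights, Finsupp.add_apply, Finsupp.single_apply, Prod.mk.injEq,
    hμ1.ne, hμ1.ne', hμ1'.ne, hμ2.ne, hμ2.ne', hμ2'.ne', (hμ1.trans hμ2).ne,
    (hμ1.trans hμ2).ne', (hμ1'.trans hμ2).ne, (hμ1.trans hμ2').ne', false_and, if_false,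
    if_true, add_zero, zero_add] at h0 h1 h2
  obtain ⟨rfl, rfl⟩ : μ2' = μ2 ∧ σ2' = σ2 := by
    by_contra hne
    exact hlam2 (by simpa [hne] using h2)
  obtain ⟨rfl, rfl⟩ : μ1' = μ1 ∧ σ1' = σ1 := by
    by_contra hne
    exact hlam0 (by simpa [hne] using h1)
  simp only [and_self, if_true] at h2
  exact ⟨rfl, rfl, rfl, rfl, h0, h2⟩

theorem trinormal_mixture_identifiable_general
    (μ1 μ1' μ2 μ2' σ1 σ1' σ2 σ2' lam1 lam2 lam1' lam2' : ℝ)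
    (hμ1 : μ1 < 0) (hμ1' : μ1' < 0) (hμ2 : 0 < μ2) (hμ2' : 0 < μ2')
    (hσ1 : 0 < σ1) (hσ1' : 0 < σ1') (hσ2 : 0 < σ2) (hσ2' : 0 < σ2')
    (hlam2 : 0 < lam2)
    (hsum : lam1 + lam2 < 1)
    (heq : ∀ t : ℝ,
      (1 - lam1 - lam2) * phiMS μ1 σ1 t + lam1 * stdPhi t + lam2 * phiMS μ2 σ2 t
        = (1 - lam1' - lam2') * phiMS μ1' σ1' t + lam1' * stdPhi t
            + lam2' * phiMS μ2' σ2' t) :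
    μ1 = μ1' ∧ σ1 = σ1' ∧ μ2 = μ2' ∧ σ2 = σ2' ∧ lam1 = lam1' ∧ lam2 = lam2' := by
  have hweights : trinormalWeights μ1 σ1 μ2 σ2 lam1 lam2
      = trinormalWeights μ1' σ1' μ2' σ2' lam1' lam2' := by
    refine linearIndepOn_iffₛ.1 linearIndepOn_phiMS _
      (trinormalWeights_mem_supported lam1 lam2 hσ1 hσ2) _
      (trinormalWeights_mem_supported lam1' lam2' hσ1' hσ2') ?_
    rw [linearCombination_trinormalWeights, linearCombination_trinormalWeights]
    exact funext heq
  exact eq_of_trinormalWeights_eq hμ1 hμ1' hμ2 hμ2' hlam2.ne' (by linarith) hweights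

/-- Identifiability of the constrained three-component Gaussian mixture. -/
theorem trinormal_mixture_identifiable
    (μ1 μ1' μ2 μ2' σ1 σ1' σ2 σ2' lam1 lam2 lam1' lam2' : ℝ)
    (hμ1 : μ1 < 0) (hμ1' : μ1' < 0) (hμ2 : 0 < μ2) (hμ2' : 0 < μ2')
    (hσ1 : 0 < σ1) (hσ1' : 0 < σ1') (hσ2 : 0 < σ2) (hσ2' : 0 < σ2')
    (hlam1 : 0 < lam1) (hlam1lt : lam1 < 1) (hlam2 : 0 < lam2) (hlam2lt : lam2 < 1)
    (hlam1' : 0 < lam1') (hlam1lt' : lam1' < 1) (hlam2' : 0 < lam2') (hlam2lt' : lam2' < 1)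
    (hsum : lam1 + lam2 < 1) (hsum' : lam1' + lam2' < 1)
    (heq : ∀ t : ℝ,
      (1 - lam1 - lam2) * phiMS μ1 σ1 t + lam1 * stdPhi t + lam2 * phiMS μ2 σ2 t
        = (1 - lam1' - lam2') * phiMS μ1' σ1' t + lam1' * stdPhi t
            + lam2' * phiMS μ2' σ2' t) :
    μ1 = μ1' ∧ σ1 = σ1' ∧ μ2 = μ2' ∧ σ2 = σ2' ∧ lam1 = lam1' ∧ lam2 = lam2' :=
  trinormal_mixture_identifiable_general μ1 μ1' μ2 μ2' σ1 σ1' σ2 σ2' lam1 lam2 lam1' lam2' hμ1 hμ1'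
    hμ2 hμ2' hσ1 hσ1' hσ2 hσ2' hlam2 hsum heq
end

section
/- L² closeness of normalized ranks to i.i.d. uniforms. Let N ≥ 1 and let U_1, ..., U_N be i.i.d. random variables uniformly distributed on [0,1]. For each j define the rank R_j = #{ i ∈ {1,...,N} : U_i ≤ U_j }. Then for every j ∈ {1,...,N}, E[(U_j − R_j/(N+1))²] = (1/N) Σ_{k=1}^{N} k(N−k+1)/((N+1)²(N+2)) = 1/(6(N+1)) < 1/N. -/
/-!
Write `c(x, u) = u - 1{x ≤ u}`. Since `R j` counts `j` itself,
`(N + 1) U j - R j = (2 U j - 1) + ∑_{i ≠ j} c(U i, U j)`.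
Conditionally on `U j = u`, the variables `c(U i, u)`, `i ≠ j`, are independent with mean
`∫ c(x, u) dx = 0`, so all these summands are orthogonal in `L²`. Their second moments are
`E (2 U j - 1)² = 1/3` and `E [U j (1 - U j)] = 1/6`, whence
`E (U j - R j / (N + 1))² = (1/3 + (N - 1)/6) / (N + 1)² = 1 / (6 (N + 1))`.
-/

open MeasureTheory ProbabilityTheory Finset

local notation "𝒰" => (volume.restrict (Set.Icc (0 : ℝ) 1) : Measure ℝ)

theorem ProbabilityTheory.IndepFun.integral_comp_eq_integral_integral {Ω α β E : Type*}
    [MeasurableSpace Ω] [MeasurableSpace α] [MeasurableSpace β]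
    [NormedAddCommGroup E] [NormedSpace ℝ E]
    {P : Measure Ω} [IsFiniteMeasure P] {X : Ω → α} {W : Ω → β} (hXW : IndepFun X W P)
    (hX : Measurable X) (hW : Measurable W) {F : α → β → E}
    (hF : AEStronglyMeasurable (Function.uncurry F) ((P.map X).prod (P.map W)))
    (hint : Integrable (fun ω => F (X ω) (W ω)) P) :
    ∫ ω, F (X ω) (W ω) ∂P = ∫ b, ∫ a, F a b ∂(P.map X) ∂(P.map W) := by
  have hmap := hXW.map_prod_eq_prod_map_map hX.aemeasurable hW.aemeasurable
  rw [← hmap] at hF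
  have hint' := (integrable_map_measure hF (hX.prodMk hW).aemeasurable).2 hint
  rw [hmap] at hint'
  calc ∫ ω, F (X ω) (W ω) ∂P
      = ∫ p, Function.uncurry F p ∂(P.map fun ω => (X ω, W ω)) :=
        (integral_map (hX.prodMk hW).aemeasurable hF).symm
    _ = _ := by rw [hmap]; exact integral_prod_symm _ hint'

theorem integral_sq_sum_of_orthogonal {ι Ω : Type*} [MeasurableSpace Ω] {μ : Measure Ω}
    (s : Finset ι) {f : ι → Ω → ℝ} (hf : ∀ i ∈ s, MemLp (f i) 2 μ)
    (horth : ∀ i ∈ s, ∀ k ∈ s, i ≠ k → ∫ ω, f i ω * f k ω ∂μ = 0) :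
    ∫ ω, (∑ i ∈ s, f i ω) ^ 2 ∂μ = ∑ i ∈ s, ∫ ω, f i ω ^ 2 ∂μ := by
  have hint : ∀ i ∈ s, ∀ k ∈ s, Integrable (fun ω => f i ω * f k ω) μ :=
    fun i hi k hk => (hf i hi).integrable_mul (hf k hk)
  simp_rw [sq, sum_mul_sum]
  rw [integral_finsetSum _ fun i hi => integrable_finsetSum _ fun k hk => hint i hi k hk]
  refine sum_congr rfl fun i hi => ?_
  rw [integral_finsetSum _ fun k hk => hint i hi k hk]
  exact sum_eq_single_of_mem i hi fun k hk hki => horth i hi k hk hki.symm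

theorem sum_Icc_mul_sub (a : ℝ) (n : ℕ) :
    ∑ k ∈ Icc 1 n, (k : ℝ) * (a - k) = n * (n + 1) * (3 * a - 2 * n - 1) / 6 := by
  induction n with
  | zero => simp
  | succ n ih =>
    rw [sum_Icc_succ_top (by omega), ih]
    push_cast
    ring

instance : IsProbabilityMeasure 𝒰 := ⟨by simp⟩

theorem integral_uniform_eq_intervalIntegral (f : ℝ → ℝ) :
    ∫ x, f x ∂𝒰 = ∫ x in (0 : ℝ)..1, f x := by
  rw [integral_Icc_eq_integral_Ioc, intervalIntegral.integral_of_le zero_le_one]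

theorem integral_mul_one_sub_uniform : ∫ u, u * (1 - u) ∂𝒰 = 1 / 6 := by
  rw [integral_uniform_eq_intervalIntegral]
  norm_num [mul_sub, ← sq, intervalIntegral.integral_sub, intervalIntegral.intervalIntegrable_id]

theorem integral_two_mul_sub_one_sq_uniform : ∫ u, (2 * u - 1) ^ 2 ∂𝒰 = 1 / 3 := by
  rw [integral_uniform_eq_intervalIntegral,
    intervalIntegral.integral_comp_mul_sub (fun x => x ^ 2) two_ne_zero]
  norm_num

theorem integral_ite_le_uniform {u : ℝ} (hu : u ∈ Set.Icc (0 : ℝ) 1) :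
    ∫ x, (if x ≤ u then (1 : ℝ) else 0) ∂𝒰 = u := by
  have hind : (fun x : ℝ => if x ≤ u then (1 : ℝ) else 0) = (Set.Iic u).indicator 1 := by
    ext x; simp [Set.indicator_apply]
  have hset : Set.Iic u ∩ Set.Icc 0 1 = Set.Icc 0 u := by
    ext x; simp only [Set.mem_inter_iff, Set.mem_Iic, Set.mem_Icc]; grind
  rw [hind, integral_indicator_one measurableSet_Iic,
    measureReal_restrict_apply measurableSet_Iic, hset]
  simp [hu.1]

theorem integrable_ite_le_uniform (u : ℝ) :
    Integrable (fun x : ℝ => if x ≤ u then (1 : ℝ) else 0) 𝒰 :=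
  (integrable_const 1).mono' (Measurable.ite measurableSet_Iic measurable_const
    measurable_const).aestronglyMeasurable (.of_forall fun x => by split_ifs <;> simp)

noncomputable def centeredIndicator (x u : ℝ) : ℝ := u - if x ≤ u then 1 else 0

theorem measurable_centeredIndicator : Measurable (Function.uncurry centeredIndicator) :=
  measurable_snd.sub <| Measurable.ite (measurableSet_le measurable_fst measurable_snd)
    measurable_const measurable_const

theorem abs_centeredIndicator_le_one (x : ℝ) {u : ℝ} (hu : u ∈ Set.Icc (0 : ℝ) 1) :
    |centeredIndicator x u| ≤ 1 := by
  unfold centeredIndicator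
  split_ifs <;> rw [abs_le] <;> constructor <;> linarith [hu.1, hu.2]

theorem integral_centeredIndicator_uniform {u : ℝ} (hu : u ∈ Set.Icc (0 : ℝ) 1) :
    ∫ x, centeredIndicator x u ∂𝒰 = 0 := by
  simp only [centeredIndicator]
  rw [integral_sub (integrable_const u) (integrable_ite_le_uniform u),
    integral_ite_le_uniform hu]
  simp

theorem integral_centeredIndicator_sq_uniform {u : ℝ} (hu : u ∈ Set.Icc (0 : ℝ) 1) :
    ∫ x, centeredIndicator x u ^ 2 ∂𝒰 = u * (1 - u) := by
  have hsq : ∀ x, centeredIndicator x u ^ 2 = u ^ 2 - (2 * u - 1) * if x ≤ u then 1 else 0 := by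
    intro x; simp only [centeredIndicator]; split_ifs <;> ring
  simp only [hsq]
  rw [integral_sub (integrable_const _) ((integrable_ite_le_uniform u).const_mul _),
    integral_const_mul, integral_ite_le_uniform hu]
  rw [integral_const, probReal_univ, one_smul]
  ring

section Uniform

variable {Ω : Type*} [MeasurableSpace Ω] {P : Measure Ω}

theorem ae_mem_Icc_of_map_eq_uniform {X : Ω → ℝ} (hX : Measurable X) (hlaw : P.map X = 𝒰) :
    ∀ᵐ ω ∂P, X ω ∈ Set.Icc (0 : ℝ) 1 := by
  have h : ∀ᵐ x ∂P.map X, x ∈ Set.Icc (0 : ℝ) 1 := hlaw ▸ ae_restrict_mem measurableSet_Icc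
  exact (ae_map_iff hX.aemeasurable measurableSet_Icc).1 h

variable [IsProbabilityMeasure P]

theorem integral_centeredIndicator_mul_eq_zero {β : Type*} [MeasurableSpace β] {X : Ω → ℝ}
    {W : Ω → β} (hXW : IndepFun X W P) (hX : Measurable X) (hW : Measurable W)
    (hlaw : P.map X = 𝒰) {v h : β → ℝ} (hv : Measurable v) (hh : Measurable h)
    (hv01 : ∀ᵐ ω ∂P, v (W ω) ∈ Set.Icc (0 : ℝ) 1)
    (hint : Integrable (fun ω => centeredIndicator (X ω) (v (W ω)) * h (W ω)) P) :
    ∫ ω, centeredIndicator (X ω) (v (W ω)) * h (W ω) ∂P = 0 := by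
  have hF : Measurable (Function.uncurry fun a b => centeredIndicator a (v b) * h b) :=
    (measurable_centeredIndicator.comp (measurable_fst.prodMk (hv.comp measurable_snd))).mul
      (hh.comp measurable_snd)
  rw [hXW.integral_comp_eq_integral_integral hX hW hF.aestronglyMeasurable hint, hlaw]
  refine integral_eq_zero_of_ae ?_
  filter_upwards [(ae_map_iff hW.aemeasurable (measurableSet_Icc.preimage hv)).2 hv01] with b hb
  rw [integral_mul_const, integral_centeredIndicator_uniform hb, zero_mul, Pi.zero_apply]

theorem integral_centeredIndicator_sq {X Y : Ω → ℝ} (hXY : IndepFun X Y P) (hX : Measurable X)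
    (hY : Measurable Y) (hXlaw : P.map X = 𝒰) (hYlaw : P.map Y = 𝒰) :
    ∫ ω, centeredIndicator (X ω) (Y ω) ^ 2 ∂P = 1 / 6 := by
  have hF : Measurable (Function.uncurry fun a b => centeredIndicator a b ^ 2) :=
    measurable_centeredIndicator.pow_const 2
  have hint : Integrable (fun ω => centeredIndicator (X ω) (Y ω) ^ 2) P := by
    refine .of_bound (hF.comp (hX.prodMk hY)).aestronglyMeasurable 1 ?_
    filter_upwards [ae_mem_Icc_of_map_eq_uniform hY hYlaw] with ω hω
    rw [norm_pow, Real.norm_eq_abs]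
    exact pow_le_one₀ (abs_nonneg _) (abs_centeredIndicator_le_one _ hω)
  rw [hXY.integral_comp_eq_integral_integral hX hY hF.aestronglyMeasurable hint, hXlaw, hYlaw,
    ← integral_mul_one_sub_uniform]
  refine integral_congr_ae ?_
  filter_upwards [ae_restrict_mem measurableSet_Icc] with u hu
  exact integral_centeredIndicator_sq_uniform hu

end Uniform

section Rank

variable {ι Ω : Type*} [DecidableEq ι]

noncomputable def rankSummand (U : ι → Ω → ℝ) (j i : ι) (ω : Ω) : ℝ :=
  if i = j then 2 * U j ω - 1 else centeredIndicator (U i ω) (U j ω)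

theorem sum_rankSummand [Fintype ι] (U : ι → Ω → ℝ) (j : ι) (ω : Ω) :
    ∑ i, rankSummand U j i ω
      = (Fintype.card ι + 1) * U j ω - #{i | U i ω ≤ U j ω} := by
  have h : ∀ i, rankSummand U j i ω
      = U j ω - (if U i ω ≤ U j ω then 1 else 0) + if i = j then U j ω else 0 := by
    intro i
    by_cases hij : i = j
    · subst hij
      simp only [rankSummand, if_pos, le_refl]
      ring
    · simp [rankSummand, centeredIndicator, hij]
  simp only [h, sum_add_distrib, sum_sub_distrib, natCast_card_filter, sum_const, card_univ,
    nsmul_eq_mul, sum_ite_eq', mem_univ, if_true]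
  ring

variable [MeasurableSpace Ω] {P : Measure Ω} [IsProbabilityMeasure P] {U : ι → Ω → ℝ}

theorem measurable_rankSummand (hU : ∀ i, Measurable (U i)) (j i : ι) :
    Measurable (rankSummand U j i) := by
  unfold rankSummand
  split_ifs
  · exact (measurable_const.mul (hU j)).sub measurable_const
  · exact measurable_centeredIndicator.comp ((hU i).prodMk (hU j))

theorem memLp_rankSummand (hU : ∀ i, Measurable (U i)) (hlaw : ∀ i, P.map (U i) = 𝒰)
    (p : ENNReal) (j i : ι) : MemLp (rankSummand U j i) p P := by
  refine .of_bound (measurable_rankSummand hU j i).aestronglyMeasurable 1 ?_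
  filter_upwards [ae_mem_Icc_of_map_eq_uniform (hU j) (hlaw j)] with ω hω
  rw [Real.norm_eq_abs]
  unfold rankSummand
  split_ifs
  · exact abs_le.2 ⟨by linarith [hω.1], by linarith [hω.2]⟩
  · exact abs_centeredIndicator_le_one _ hω

theorem integral_rankSummand_mul_eq_zero (hindep : iIndepFun U P) (hU : ∀ i, Measurable (U i))
    (hlaw : ∀ i, P.map (U i) = 𝒰) {j i k : ι} (hik : i ≠ k) :
    ∫ ω, rankSummand U j i ω * rankSummand U j k ω ∂P = 0 := by
  wlog hij : i ≠ j generalizing i k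
  · have hkj : k ≠ j := fun hkj => hik (by rw [not_not.1 hij, hkj])
    simpa only [mul_comm] using this hik.symm hkj
  -- `U i` is independent of `(U k, U j)`, which determines `rankSummand U j k`.
  have hind : IndepFun (U i) (fun ω => (U k ω, U j ω)) P :=
    (hindep.indepFun_prodMk hU k j i hik.symm (Ne.symm hij)).symm
  have hint : Integrable (fun ω => rankSummand U j i ω * rankSummand U j k ω) P :=
    (memLp_rankSummand hU hlaw 2 j i).integrable_mul (memLp_rankSummand hU hlaw 2 j k)
  have hmeas : Measurable fun b : ℝ × ℝ =>
      if k = j then 2 * b.2 - 1 else centeredIndicator b.1 b.2 := by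
    split_ifs
    · fun_prop
    · exact measurable_centeredIndicator
  simp only [rankSummand, if_neg hij] at hint ⊢
  exact integral_centeredIndicator_mul_eq_zero hind (hU i) ((hU k).prodMk (hU j)) (hlaw i)
    measurable_snd hmeas (ae_mem_Icc_of_map_eq_uniform (hU j) (hlaw j)) hint

theorem integral_rankSummand_sq (hindep : iIndepFun U P) (hU : ∀ i, Measurable (U i))
    (hlaw : ∀ i, P.map (U i) = 𝒰) (j i : ι) :
    ∫ ω, rankSummand U j i ω ^ 2 ∂P = if i = j then 1 / 3 else 1 / 6 := by
  unfold rankSummand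
  split_ifs with hij
  · rw [← integral_two_mul_sub_one_sq_uniform, ← hlaw j,
      integral_map (hU j).aemeasurable (by fun_prop)]
  · exact integral_centeredIndicator_sq (hindep.indepFun hij) (hU i) (hU j) (hlaw i) (hlaw j)

end Rank

theorem rank_L2_close_to_uniform_general
    {Ω : Type*} [MeasurableSpace Ω] (P : Measure Ω) [IsProbabilityMeasure P]
    (N : ℕ)
    (U : Fin N → Ω → ℝ) (hU : ∀ i, Measurable (U i))
    (hindep : iIndepFun U P)
    (hunif : ∀ i, P.map (U i) = volume.restrict (Set.Icc (0 : ℝ) 1))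
    (R : Fin N → Ω → ℕ)
    (hR : ∀ j ω, R j ω = (Finset.univ.filter fun i => U i ω ≤ U j ω).card) :
    ∀ j : Fin N,
      (∫ ω, (U j ω - (R j ω : ℝ) / ((N : ℝ) + 1)) ^ 2 ∂P
        = (1 / (N : ℝ)) * ∑ k ∈ Finset.Icc 1 N,
            (k : ℝ) * ((N : ℝ) - k + 1) / (((N : ℝ) + 1) ^ 2 * ((N : ℝ) + 2)))
      ∧ ((1 / (N : ℝ)) * ∑ k ∈ Finset.Icc 1 N,
            (k : ℝ) * ((N : ℝ) - k + 1) / (((N : ℝ) + 1) ^ 2 * ((N : ℝ) + 2))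
          = 1 / (6 * ((N : ℝ) + 1)))
      ∧ (1 / (6 * ((N : ℝ) + 1)) < 1 / (N : ℝ)) := by
  intro j
  have hN : (0 : ℝ) < N := Nat.cast_pos.2 j.pos
  have hsum : (1 / (N : ℝ)) * ∑ k ∈ Icc 1 N,
      (k : ℝ) * ((N : ℝ) - k + 1) / (((N : ℝ) + 1) ^ 2 * ((N : ℝ) + 2))
        = 1 / (6 * ((N : ℝ) + 1)) := by
    simp_rw [← sum_div, sub_add_eq_add_sub, sum_Icc_mul_sub]
    field_simp
    ring
  refine ⟨?_, hsum, one_div_lt_one_div_of_lt hN (by linarith)⟩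
  have hresidual : ∀ ω, U j ω - (R j ω : ℝ) / (N + 1)
      = (∑ i, rankSummand U j i ω) / (N + 1) := by
    intro ω
    rw [sum_rankSummand, Fintype.card_fin, hR]
    field_simp
  have hsecond : ∑ i, ∫ ω, rankSummand U j i ω ^ 2 ∂P = (N + 1) / 6 := by
    simp only [integral_rankSummand_sq hindep hU hunif]
    rw [sum_ite, filter_eq', filter_ne']
    simp only [mem_univ, if_true, sum_const, card_singleton, one_smul, card_erase_of_mem, card_univ,
      Fintype.card_fin, nsmul_eq_mul, Nat.cast_pred j.pos]
    ring
  rw [hsum]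
  simp_rw [hresidual, div_pow]
  rw [integral_div, integral_sq_sum_of_orthogonal _ (fun i _ => memLp_rankSummand hU hunif 2 j i)
    (fun i _ k _ hik => integral_rankSummand_mul_eq_zero hindep hU hunif hik), hsecond]
  field_simp

/-- L² closeness of normalized ranks to i.i.d. uniforms. -/
theorem rank_L2_close_to_uniform
    {Ω : Type*} [MeasurableSpace Ω] (P : Measure Ω) [IsProbabilityMeasure P]
    (N : ℕ) (hN : 1 ≤ N)
    (U : Fin N → Ω → ℝ) (hU : ∀ i, Measurable (U i))
    (hindep : iIndepFun U P)
    (hunif : ∀ i, P.map (U i) = volume.restrict (Set.Icc (0 : ℝ) 1))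
    (R : Fin N → Ω → ℕ)
    (hR : ∀ j ω, R j ω = (Finset.univ.filter fun i => U i ω ≤ U j ω).card) :
    ∀ j : Fin N,
      (∫ ω, (U j ω - (R j ω : ℝ) / ((N : ℝ) + 1)) ^ 2 ∂P
        = (1 / (N : ℝ)) * ∑ k ∈ Finset.Icc 1 N,
            (k : ℝ) * ((N : ℝ) - k + 1) / (((N : ℝ) + 1) ^ 2 * ((N : ℝ) + 2)))
      ∧ ((1 / (N : ℝ)) * ∑ k ∈ Finset.Icc 1 N,
            (k : ℝ) * ((N : ℝ) - k + 1) / (((N : ℝ) + 1) ^ 2 * ((N : ℝ) + 2))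
          = 1 / (6 * ((N : ℝ) + 1)))
      ∧ (1 / (6 * ((N : ℝ) + 1)) < 1 / (N : ℝ)) :=
  rank_L2_close_to_uniform_general P N U hU hindep hunif R hR
end
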